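/- Let α, β be real numbers with α > β > −1/2 and ρ = α + β + 1, and let c be the Jacobi c-function. There exist constants C, R > 0 such that for all real λ with |λ| ≥ R, the derivative of the function λ ↦ c(λ)^{−1} satisfies |(c^{−1})′(λ)| ≤ C |λ|^{α − 1/2}. -/

import Mathlib

open Complex

/-- The Jacobi `c`-function
`c(λ) = 2^{ρ−iλ} Γ(iλ) Γ(α+1) / (Γ((ρ+iλ)/2) Γ((ρ+iλ)/2 − β))` with `ρ = α+β+1`. -/
noncomputable def jacobiC (α β : ℝ) (z : ℂ) : ℂ :=
  (2 : ℂ) ^ ((α : ℂ) + β + 1 - Complex.I * z) * Complex.Gamma (Complex.I * z) *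
    Complex.Gamma ((α : ℂ) + 1) /
    (Complex.Gamma (((α : ℂ) + β + 1 + Complex.I * z) / 2) *
     Complex.Gamma (((α : ℂ) + β + 1 + Complex.I * z) / 2 - β))

/-!
By the duplication formula, `c(λ)⁻¹` is a constant times
`Γ(w + ρ/2) / Γ(w) · Γ(w + 1/2 + (α - β)/2) / Γ(w + 1/2)` with `w = iλ/2`.
In the sector `|Re w| ≤ |Im w| / 2` one has `|Γ(w + a) / Γ(w)| ≲ |Im w| ^ a`: for `0 ≤ a ≤ 1`
this follows from Gauss's product `Γ(w) = lim GammaSeq w n`, because weighted AM-GM bounds each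
factor `|w + j| / |w + a + j|` by `(|w + j| / |w + j + 1|) ^ a` up to a factor
`exp (1 / (8 |w + a + j|²))` whose product stays bounded, and the main terms telescope; larger `a`
follow from `Γ(s + 1) = s Γ(s)`. Hence `|c(z)⁻¹| ≲ |Re z| ^ (α + 1/2)` in a sector around the
real axis, and Cauchy's estimate on the disc of radius `|λ| / 8` gives the bound on the derivative.
-/

open Filter Finset

theorem add_one_div_four_le_norm_add_ofReal {v : ℂ} (him : 1 ≤ |v.im|)
    (hre : |v.re| ≤ |v.im| / 2) (t : ℝ) : (t + 1) / 4 ≤ ‖v + t‖ := by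
  by_cases h : t + 1 ≤ 4 * |v.im|
  · calc (t + 1) / 4 ≤ |(v + t).im| := by simp; linarith
      _ ≤ ‖v + t‖ := abs_im_le_norm _
  · calc (t + 1) / 4 ≤ (v + t).re := by
          simp only [add_re, ofReal_re]; linarith [neg_abs_le v.re]
      _ ≤ ‖v + t‖ := re_le_norm _

theorem sum_one_div_norm_add_sq_le {v : ℂ} (him : 1 ≤ |v.im|) (hre : |v.re| ≤ |v.im| / 2)
    {a : ℝ} (ha : 0 ≤ a) (N : ℕ) :
    ∑ j ∈ range N, 1 / (8 * ‖v + a + j‖ ^ 2) ≤ Real.pi ^ 2 / 3 := by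
  have hterm (j : ℕ) : 1 / (8 * ‖v + a + j‖ ^ 2) ≤ 2 * (1 / ((j + 1 : ℕ) : ℝ) ^ 2) := by
    have h := add_one_div_four_le_norm_add_ofReal him hre (a + j)
    rw [ofReal_add, ofReal_natCast, ← add_assoc] at h
    calc 1 / (8 * ‖v + a + j‖ ^ 2) ≤ 1 / (8 * ((a + j + 1) / 4) ^ 2) := by gcongr
      _ = 2 * (1 / (a + j + 1) ^ 2) := by rw [div_pow]; field_simp; ring
      _ ≤ 2 * (1 / ((j + 1 : ℕ) : ℝ) ^ 2) := by push_cast; gcongr; linarith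
  calc ∑ j ∈ range N, 1 / (8 * ‖v + a + j‖ ^ 2)
      ≤ 2 * ∑ n ∈ range (N + 1), 1 / (n : ℝ) ^ 2 := by
        rw [sum_range_succ', mul_add, mul_sum]; simpa using sum_le_sum fun j _ => hterm j
    _ ≤ 2 * (Real.pi ^ 2 / 6) := by
        gcongr; exact sum_le_hasSum _ (fun _ _ => by positivity) hasSum_zeta_two
    _ = Real.pi ^ 2 / 3 := by ring

theorem norm_rpow_mul_norm_add_one_rpow_le (v : ℂ) {a : ℝ} (ha₀ : 0 ≤ a) (ha₁ : a ≤ 1)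
    (hv : v + a ≠ 0) :
    ‖v‖ ^ (1 - a) * ‖v + 1‖ ^ a ≤ Real.exp (1 / (8 * ‖v + a‖ ^ 2)) * ‖v + a‖ := by
  have hpos : 0 < ‖v + a‖ ^ 2 := by positivity
  have hmean : (1 - a) * ‖v‖ ^ 2 + a * ‖v + 1‖ ^ 2 = ‖v + a‖ ^ 2 + a * (1 - a) := by
    simp only [Complex.sq_norm, normSq_apply, add_re, add_im, ofReal_re, ofReal_im, one_re,
      one_im]
    ring
  refine le_of_pow_le_pow_left₀ two_ne_zero (by positivity) ?_
  calc (‖v‖ ^ (1 - a) * ‖v + 1‖ ^ a) ^ 2 = (‖v‖ ^ 2) ^ (1 - a) * (‖v + 1‖ ^ 2) ^ a := by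
        rw [mul_pow, ← Real.rpow_mul_natCast, ← Real.rpow_mul_natCast,
          ← Real.rpow_natCast_mul, ← Real.rpow_natCast_mul] <;> first | positivity | ring_nf
    _ ≤ (1 - a) * ‖v‖ ^ 2 + a * ‖v + 1‖ ^ 2 :=
        Real.geom_mean_le_arith_mean2_weighted (by linarith) ha₀ (by positivity)
          (by positivity) (by ring)
    _ ≤ ‖v + a‖ ^ 2 * (2 * (1 / (8 * ‖v + a‖ ^ 2)) + 1) := by
        rw [hmean]; field_simp; nlinarith [sq_nonneg (2 * a - 1)]
    _ ≤ ‖v + a‖ ^ 2 * Real.exp (2 * (1 / (8 * ‖v + a‖ ^ 2))) := by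
        gcongr; exact Real.add_one_le_exp _
    _ = (Real.exp (1 / (8 * ‖v + a‖ ^ 2)) * ‖v + a‖) ^ 2 := by
        rw [mul_pow, ← Real.exp_nat_mul]; push_cast; ring

theorem prod_rpow_one_sub_mul_rpow_succ {f : ℕ → ℝ} (hf : ∀ j, 0 < f j) (a : ℝ) (N : ℕ) :
    ∏ j ∈ range N, f j ^ (1 - a) * f (j + 1) ^ a = (∏ j ∈ range N, f j) * (f N / f 0) ^ a := by
  induction N with
  | zero => simp [(hf 0).ne']
  | succ N ih =>
    rw [prod_range_succ, prod_range_succ, ih, Real.div_rpow (hf N).le (hf 0).le,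
      Real.div_rpow (hf _).le (hf 0).le, Real.rpow_sub (hf N), Real.rpow_one]
    have := Real.rpow_pos_of_pos (hf N) a
    field_simp

theorem prod_norm_add_natCast_div_norm_le (v : ℂ) {a : ℝ} (ha₀ : 0 ≤ a) (ha₁ : a ≤ 1)
    (hv : ∀ j : ℕ, v + j ≠ 0) (hva : ∀ j : ℕ, v + a + j ≠ 0) (N : ℕ) :
    ∏ j ∈ range N, ‖v + j‖ / ‖v + a + j‖ ≤
      Real.exp (∑ j ∈ range N, 1 / (8 * ‖v + a + j‖ ^ 2)) * (‖v‖ / ‖v + N‖) ^ a := by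
  have hQ : 0 < ∏ j ∈ range N, ‖v + a + j‖ := prod_pos fun j _ => norm_pos_iff.2 (hva j)
  have hR : 0 < (‖v + N‖ / ‖v‖) ^ a :=
    Real.rpow_pos_of_pos (div_pos (norm_pos_iff.2 (hv N)) (norm_pos_iff.2 (by simpa using hv 0))) a
  rw [prod_div_distrib, div_le_iff₀ hQ, ← inv_div, Real.inv_rpow (by positivity), mul_right_comm,
    ← div_eq_mul_inv, le_div_iff₀ hR]
  have htel := prod_rpow_one_sub_mul_rpow_succ (f := fun j : ℕ => ‖v + j‖)
    (fun j => norm_pos_iff.2 (hv j)) a N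
  simp only [Nat.cast_zero, add_zero, Nat.cast_succ] at htel
  rw [← htel, Real.exp_sum, ← prod_mul_distrib]
  refine prod_le_prod (fun _ _ => by positivity) fun j _ => ?_
  rw [add_right_comm v, ← add_assoc]
  exact norm_rpow_mul_norm_add_one_rpow_le (v + j) ha₀ ha₁ (by rw [add_right_comm]; exact hva j)

theorem ne_neg_natCast_of_im_ne_zero {s : ℂ} (hs : s.im ≠ 0) (m : ℕ) : s ≠ -m :=
  fun h => hs (by simp [h])

theorem add_ofReal_ne_zero_of_im_ne_zero {s : ℂ} (hs : s.im ≠ 0) (t : ℝ) : s + t ≠ 0 :=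
  fun h => hs (by simpa using congrArg im h)

theorem norm_GammaSeq (s : ℂ) {n : ℕ} (hn : 0 < n) :
    ‖GammaSeq s n‖ = n ^ s.re * n.factorial / ∏ j ∈ range (n + 1), ‖s + j‖ := by
  simp [GammaSeq, norm_natCast_cpow_of_pos hn, norm_prod]

theorem norm_GammaSeq_add_div_norm_GammaSeq_le {a : ℝ} (ha₀ : 0 ≤ a) (ha₁ : a ≤ 1) {w : ℂ}
    (him : 1 ≤ |w.im|) (hre : |w.re| ≤ |w.im| / 2) {n : ℕ} (hn : 0 < n) :
    ‖GammaSeq (w + a) n‖ / ‖GammaSeq w n‖ ≤ 6 * Real.exp (Real.pi ^ 2 / 3) * |w.im| ^ a := by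
  have hne := add_ofReal_ne_zero_of_im_ne_zero (abs_pos.1 (by linarith) : w.im ≠ 0)
  have hw : 0 < ‖w‖ := norm_pos_iff.2 (by simpa using hne 0)
  have hN : (n + 2 : ℝ) / 4 ≤ ‖w + (n + 1 : ℕ)‖ := by
    have := add_one_div_four_le_norm_add_ofReal him hre (n + 1)
    push_cast at this ⊢; linarith
  have hprod := prod_norm_add_natCast_div_norm_le w ha₀ ha₁ (fun j => by simpa using hne j)
    (fun j => by simpa [add_assoc] using hne (a + j)) (n + 1)
  calc ‖GammaSeq (w + a) n‖ / ‖GammaSeq w n‖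
      = n ^ a * ∏ j ∈ range (n + 1), ‖w + j‖ / ‖w + a + j‖ := by
        rw [norm_GammaSeq _ hn, norm_GammaSeq _ hn, add_re, ofReal_re,
          Real.rpow_add (by exact_mod_cast hn), prod_div_distrib]
        field_simp
    _ ≤ n ^ a * (Real.exp (Real.pi ^ 2 / 3) * (‖w‖ / ‖w + (n + 1 : ℕ)‖) ^ a) := by
        grw [hprod, sum_one_div_norm_add_sq_le him hre ha₀]
    _ = Real.exp (Real.pi ^ 2 / 3) * (n * ‖w‖ / ‖w + (n + 1 : ℕ)‖) ^ a := by
        rw [mul_div_assoc, Real.mul_rpow (by positivity) (by positivity)]; ring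
    _ ≤ Real.exp (Real.pi ^ 2 / 3) * (6 * |w.im|) ^ a := by
        gcongr
        rw [div_le_iff₀ (hN.trans_lt' (by positivity))]
        have hw' : ‖w‖ ≤ 3 / 2 * |w.im| := by linarith [norm_le_abs_re_add_abs_im w]
        calc n * ‖w‖ ≤ 4 * ‖w + (n + 1 : ℕ)‖ * (3 / 2 * |w.im|) := by gcongr; linarith
          _ = 6 * |w.im| * ‖w + (n + 1 : ℕ)‖ := by ring
    _ ≤ 6 * Real.exp (Real.pi ^ 2 / 3) * |w.im| ^ a := by
        rw [Real.mul_rpow (by norm_num) (abs_nonneg _), mul_left_comm, mul_assoc]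
        gcongr
        exact Real.rpow_le_self_of_one_le (by norm_num) ha₁

theorem norm_Gamma_add_div_Gamma_le_of_le_one {a : ℝ} (ha₀ : 0 ≤ a) (ha₁ : a ≤ 1) {w : ℂ}
    (him : 1 ≤ |w.im|) (hre : |w.re| ≤ |w.im| / 2) :
    ‖Gamma (w + a) / Gamma w‖ ≤ 6 * Real.exp (Real.pi ^ 2 / 3) * |w.im| ^ a := by
  have hΓ : Gamma w ≠ 0 :=
    Gamma_ne_zero (ne_neg_natCast_of_im_ne_zero fun h => by simp [h] at him; linarith)
  rw [norm_div]
  refine le_of_tendsto ((GammaSeq_tendsto_Gamma _).norm.div (GammaSeq_tendsto_Gamma w).norm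
    (norm_ne_zero_iff.2 hΓ)) ?_
  filter_upwards [eventually_gt_atTop 0] with n hn
  exact norm_GammaSeq_add_div_norm_GammaSeq_le ha₀ ha₁ him hre hn

theorem exists_norm_Gamma_add_div_Gamma_le {a : ℝ} (ha : 0 ≤ a) :
    ∃ C M : ℝ, 0 < C ∧ ∀ w : ℂ, M ≤ |w.im| → |w.re| ≤ |w.im| / 2 →
      ‖Gamma (w + a) / Gamma w‖ ≤ C * |w.im| ^ a := by
  have base (a : ℝ) (ha₀ : 0 ≤ a) (ha₁ : a ≤ 1) : ∃ C M : ℝ, 0 < C ∧ ∀ w : ℂ, M ≤ |w.im| →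
      |w.re| ≤ |w.im| / 2 → ‖Gamma (w + a) / Gamma w‖ ≤ C * |w.im| ^ a :=
    ⟨_, 1, by positivity, fun _ him hre => norm_Gamma_add_div_Gamma_le_of_le_one ha₀ ha₁ him hre⟩
  suffices ∀ n : ℕ, ∀ a : ℝ, 0 ≤ a → a ≤ n + 1 → ∃ C M : ℝ, 0 < C ∧ ∀ w : ℂ, M ≤ |w.im| →
      |w.re| ≤ |w.im| / 2 → ‖Gamma (w + a) / Gamma w‖ ≤ C * |w.im| ^ a from
    this ⌈a⌉₊ a ha ((Nat.le_ceil a).trans (by linarith))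
  intro n
  induction n with
  | zero => intro a ha₀ ha₁; exact base a ha₀ (by simpa using ha₁)
  | succ n ih =>
    intro a ha₀ han
    rcases le_or_gt a 1 with ha₁ | ha₁
    · exact base a ha₀ ha₁
    obtain ⟨C, M, hC, hbound⟩ := ih (a - 1) (by linarith) (by push_cast at han; linarith)
    refine ⟨2 * C, max M (2 * a), by positivity, fun w hM hre => ?_⟩
    have hy : 2 * a ≤ |w.im| := le_of_max_le_right hM
    have hne := add_ofReal_ne_zero_of_im_ne_zero (abs_pos.1 (by linarith) : w.im ≠ 0) (a - 1)
    have hnorm : ‖w + (a - 1 : ℝ)‖ ≤ 2 * |w.im| := by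
      have := norm_add_le w (a - 1 : ℝ)
      rw [norm_real, Real.norm_of_nonneg (by linarith)] at this
      linarith [norm_le_abs_re_add_abs_im w]
    rw [show w + a = w + (a - 1 : ℝ) + 1 by push_cast; ring, Gamma_add_one _ hne, mul_div_assoc,
      norm_mul]
    calc ‖w + (a - 1 : ℝ)‖ * ‖Gamma (w + (a - 1 : ℝ)) / Gamma w‖
        ≤ 2 * |w.im| * (C * |w.im| ^ (a - 1)) := by
          gcongr; exact hbound w (le_of_max_le_left hM) hre
      _ = 2 * C * |w.im| ^ a := by
          have : |w.im| ≠ 0 := (by linarith : (0:ℝ) < |w.im|).ne'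
          rw [Real.rpow_sub_one this]; field_simp

theorem jacobiC_inv_eq (α β : ℝ) (z : ℂ) :
    (jacobiC α β z)⁻¹ = √Real.pi / (2 ^ ((α : ℂ) + β) * Gamma (α + 1)) *
      (Gamma (I * z / 2 + ((α + β + 1) / 2 : ℝ)) / Gamma (I * z / 2)) *
      (Gamma (I * z / 2 + 1 / 2 + ((α - β) / 2 : ℝ)) / Gamma (I * z / 2 + 1 / 2)) := by
  have hX : (2 : ℂ) ^ (1 - I * z) ≠ 0 := by simp
  have hπ : (√Real.pi : ℂ) ≠ 0 := ofReal_ne_zero.2 (Real.sqrt_pos.2 Real.pi_pos).ne'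
  have hdup : Gamma (I * z) = Gamma (I * z / 2) * Gamma (I * z / 2 + 1 / 2) /
      (2 ^ (1 - I * z) * √Real.pi) := by
    rw [Gamma_mul_Gamma_add_half, show 2 * (I * z / 2) = I * z by ring]; field_simp
  have hpow : (2 : ℂ) ^ ((α : ℂ) + β + 1 - I * z) = 2 ^ ((α : ℂ) + β) * 2 ^ (1 - I * z) := by
    rw [← cpow_add _ _ two_ne_zero]; ring_nf
  rw [jacobiC, hdup, hpow,
    show ((α : ℂ) + β + 1 + I * z) / 2 - β = I * z / 2 + 1 / 2 + ((α - β) / 2 : ℝ) by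
      push_cast; ring,
    show ((α : ℂ) + β + 1 + I * z) / 2 = I * z / 2 + ((α + β + 1) / 2 : ℝ) by push_cast; ring]
  field_simp

theorem differentiableAt_Gamma_add_div_Gamma (a : ℝ) {s : ℂ} (hs : s.im ≠ 0) :
    DifferentiableAt ℂ (fun s => Gamma (s + a) / Gamma s) s := by
  have hΓ : DifferentiableAt ℂ (fun s => Gamma (s + a)) s :=
    (differentiableAt_Gamma _ (ne_neg_natCast_of_im_ne_zero (by simpa))).comp s (by fun_prop)
  have hinv : DifferentiableAt ℂ (fun s => (Gamma s)⁻¹) s := by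
    simpa using differentiable_one_div_Gamma s
  simpa only [div_eq_mul_inv] using hΓ.fun_mul hinv

theorem differentiableAt_jacobiC_inv (α β : ℝ) {z : ℂ} (hz : z.re ≠ 0) :
    DifferentiableAt ℂ (fun z => (jacobiC α β z)⁻¹) z := by
  simp_rw [jacobiC_inv_eq]
  have hw : (I * z / 2).im ≠ 0 := by simpa using hz
  have h₁ := (differentiableAt_Gamma_add_div_Gamma ((α + β + 1) / 2) hw).comp z
    (by fun_prop : DifferentiableAt ℂ (fun z => I * z / 2) z)
  have h₂ := (differentiableAt_Gamma_add_div_Gamma ((α - β) / 2)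
    (by simpa using hw : (I * z / 2 + 1 / 2).im ≠ 0)).comp z
    (by fun_prop : DifferentiableAt ℂ (fun z => I * z / 2 + 1 / 2) z)
  exact ((differentiableAt_const _).mul h₁).mul h₂

theorem exists_norm_jacobiC_inv_le {α β : ℝ} (hβ : -(1 / 2 : ℝ) < β) (hαβ : β < α) :
    ∃ C M : ℝ, 0 < C ∧ 0 < M ∧ ∀ z : ℂ, M ≤ |z.re| → 4 * |z.im| ≤ |z.re| →
      ‖(jacobiC α β z)⁻¹‖ ≤ C * |z.re| ^ (α + 1 / 2) := by
  obtain ⟨C₁, M₁, hC₁, h₁⟩ :=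
    exists_norm_Gamma_add_div_Gamma_le (a := (α + β + 1) / 2) (by linarith)
  obtain ⟨C₂, M₂, hC₂, h₂⟩ := exists_norm_Gamma_add_div_Gamma_le (a := (α - β) / 2) (by linarith)
  set K := √Real.pi / (2 ^ ((α : ℂ) + β) * Gamma (α + 1))
  refine ⟨(‖K‖ + 1) * C₁ * C₂, 2 * max (max M₁ M₂) 2, by positivity, by positivity,
    fun z hM hsec => ?_⟩
  set w := I * z / 2
  have hwim : |w.im| = |z.re| / 2 := by simp [w, abs_div]
  have hwre : |w.re| = |z.im| / 2 := by simp [w, abs_div]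
  have hM' : max (max M₁ M₂) 2 ≤ |w.im| := by rw [hwim]; linarith
  have hshift : |(w + 1 / 2).re| ≤ |w.im| / 2 := by
    have : |w.re + 1 / 2| ≤ |w.re| + 1 / 2 := by simpa using abs_add_le w.re (1 / 2)
    simp only [add_re, div_ofNat_re, one_re]
    linarith [le_of_max_le_right hM']
  have b₁ := h₁ w (by linarith [le_max_left M₁ M₂, le_of_max_le_left hM'])
    (by linarith [abs_nonneg z.re])
  have b₂ := h₂ (w + 1 / 2) (by simpa using le_of_max_le_right (le_of_max_le_left hM'))
    (by simpa using hshift)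
  simp only [add_im, div_ofNat_im, one_im, zero_div, add_zero] at b₂
  rw [jacobiC_inv_eq, norm_mul, norm_mul]
  calc ‖K‖ * ‖Gamma (w + ((α + β + 1) / 2 : ℝ)) / Gamma w‖ *
        ‖Gamma (w + 1 / 2 + ((α - β) / 2 : ℝ)) / Gamma (w + 1 / 2)‖
      ≤ (‖K‖ + 1) * (C₁ * |w.im| ^ ((α + β + 1) / 2)) * (C₂ * |w.im| ^ ((α - β) / 2)) := by
        gcongr; linarith
    _ = (‖K‖ + 1) * C₁ * C₂ * |w.im| ^ (α + 1 / 2) := by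
        rw [show α + 1 / 2 = (α + β + 1) / 2 + (α - β) / 2 by ring,
          Real.rpow_add (by linarith [le_max_right (max M₁ M₂) 2, hM'])]
        ring
    _ ≤ (‖K‖ + 1) * C₁ * C₂ * |z.re| ^ (α + 1 / 2) := by
        rw [hwim]; gcongr <;> linarith [abs_nonneg z.re]

theorem norm_deriv_le_of_norm_le_rpow {f : ℂ → ℂ} {C M s : ℝ} (hM : 0 < M) (hs : 0 ≤ s)
    (hd : ∀ z : ℂ, M ≤ |z.re| → 4 * |z.im| ≤ |z.re| → DifferentiableAt ℂ f z)
    (hb : ∀ z : ℂ, M ≤ |z.re| → 4 * |z.im| ≤ |z.re| → ‖f z‖ ≤ C * |z.re| ^ s)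
    {l : ℝ} (hl : 2 * M ≤ |l|) : ‖deriv f l‖ ≤ 8 * 2 ^ s * C * |l| ^ (s - 1) := by
  have hl₀ : 0 < |l| := by linarith
  have hC : 0 ≤ C := by
    have := (norm_nonneg _).trans (hb l (by simp; linarith) (by simp))
    simp only [ofReal_re] at this
    exact nonneg_of_mul_nonneg_left this (by positivity)
  have hball (z : ℂ) (hz : z ∈ Metric.closedBall (l : ℂ) (|l| / 8)) :
      M ≤ |z.re| ∧ 4 * |z.im| ≤ |z.re| ∧ |z.re| ≤ 2 * |l| := by
    rw [Metric.mem_closedBall, dist_eq] at hz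
    have hre : |z.re - l| ≤ |l| / 8 := by simpa using (abs_re_le_norm (z - l)).trans hz
    have him : |z.im| ≤ |l| / 8 := by simpa using (abs_im_le_norm (z - l)).trans hz
    have h₁ := abs_sub_abs_le_abs_sub z.re l
    have h₂ := abs_sub_abs_le_abs_sub l z.re
    rw [abs_sub_comm] at h₂
    refine ⟨by linarith, by linarith, by linarith⟩
  have hdiff : DiffContOnCl ℂ f (Metric.ball (l : ℂ) (|l| / 8)) := by
    refine DifferentiableOn.diffContOnCl fun z hz => ?_
    rw [closure_ball _ (by positivity)] at hz
    obtain ⟨h₁, h₂, -⟩ := hball z hz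
    exact (hd z h₁ h₂).differentiableWithinAt
  calc ‖deriv f l‖ ≤ C * (2 * |l|) ^ s / (|l| / 8) := by
        refine norm_deriv_le_of_forall_mem_sphere_norm_le (by positivity) hdiff fun z hz => ?_
        obtain ⟨h₁, h₂, h₃⟩ := hball z (Metric.sphere_subset_closedBall hz)
        exact (hb z h₁ h₂).trans (by gcongr)
    _ = 8 * 2 ^ s * C * |l| ^ (s - 1) := by
        rw [Real.mul_rpow zero_le_two hl₀.le, Real.rpow_sub_one hl₀.ne']
        field_simp

theorem jacobiCInv_deriv_bound (α β : ℝ) (hβ : -(1/2 : ℝ) < β) (hαβ : β < α) :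
    ∃ C R : ℝ, 0 < C ∧ 0 < R ∧ ∀ l : ℝ, R ≤ |l| →
      ‖deriv (fun z => (jacobiC α β z)⁻¹) (l : ℂ)‖ ≤
        C * |l| ^ (α - 1/2 : ℝ) := by
  obtain ⟨C, M, hC, hM, hbound⟩ := exists_norm_jacobiC_inv_le hβ hαβ
  refine ⟨8 * 2 ^ (α + 1 / 2) * C, 2 * M, by positivity, by positivity, fun l hl => ?_⟩
  have hderiv := norm_deriv_le_of_norm_le_rpow hM (by linarith)
    (fun z hz _ => differentiableAt_jacobiC_inv α β (abs_pos.1 (by linarith))) hbound hl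
  rwa [show α + 1 / 2 - 1 = α - 1 / 2 by ring] at hderiv
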